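/- If the characteristic p of the field k satisfies p = 0 or p > w_0 + w_1 + ... + w_d, then the complex C_•(w_0,...,w_d) is exact (has vanishing homology in all degrees). -/

import Mathlib

/-!
The arithmetic complex `C_•(w_0,…,w_d)`.

Edges of the path graph are labeled `1,…,d`; edge `i` joins vertices `i-1` and `i`
(vertices are `0,…,d`, with weights `w 0, …, w d`).  A subset `J ⊆ {1,…,d}` cuts the
path along the edges *not* in `J`, decomposing it into intervals.
-/

/-- The left endpoint (vertex) of the interval containing edge `j` in the decomposition
determined by `J`: the least vertex `v` such that all edges strictly between `v` and `j`
belong to `J`. -/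
noncomputable def ivLeft (J : Finset ℕ) (j : ℕ) : ℕ :=
  sInf {v : ℕ | ∀ k ∈ Finset.Ioo v j, k ∈ J}

/-- The right endpoint (vertex) of the interval containing edge `j`. -/
noncomputable def ivRight (d : ℕ) (J : Finset ℕ) (j : ℕ) : ℕ :=
  sSup {v : ℕ | v ≤ d ∧ ∀ k ∈ Finset.Ioc j v, k ∈ J}

/-- `w(J,j)`: the total weight of the interval containing edge `j`. -/
noncomputable def wtTot (w : ℕ → ℕ) (d : ℕ) (J : Finset ℕ) (j : ℕ) : ℕ :=
  ∑ v ∈ Finset.Icc (ivLeft J j) (ivRight d J j), w v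

/-- `w'(J,j)`: the weight of the left subinterval obtained by removing edge `j`. -/
noncomputable def wtL (w : ℕ → ℕ) (J : Finset ℕ) (j : ℕ) : ℕ :=
  ∑ v ∈ Finset.Icc (ivLeft J j) (j - 1), w v

/-- `s(J,j) = #{i : i < j, i ∉ J}`. -/
def sgn (J : Finset ℕ) (j : ℕ) : ℕ :=
  ((Finset.Ico 1 j).filter (fun i => i ∉ J)).card

/-- The differential of the arithmetic complex `C_•(w_0,…,w_d)`, on the free vector
space with basis `e_J` indexed by subsets `J ⊆ {1,…,d}`:
`∂(e_J) = ∑_{j ∈ J} (-1)^{s(J,j)} C(w(J,j), w'(J,j)) e_{J∖{j}}`. -/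
noncomputable def bnd (K : Type*) [Field K] (w : ℕ → ℕ) (d : ℕ) :
    ({J : Finset ℕ // J ⊆ Finset.Icc 1 d} →₀ K) →ₗ[K]
    ({J : Finset ℕ // J ⊆ Finset.Icc 1 d} →₀ K) :=
  Finsupp.lsum K fun J =>
    LinearMap.toSpanSingleton K _
      (∑ j ∈ J.1, ((-1 : K) ^ sgn J.1 j * ((wtTot w d J.1 j).choose (wtL w J.1 j) : K)) •
        Finsupp.single ⟨J.1.erase j, fun x hx => J.2 (Finset.mem_of_mem_erase hx)⟩ (1 : K))

/-!
The complex is contracted by the homotopy `H` that pairs `e_J` (for `1 ∉ J`) with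
`e_{J ∪ {1}}`: `H e_J = c⁻¹ e_{J ∪ {1}}`, where `c = C(w(J ∪ {1}, 1), w_0)` is the entry of `∂`
from `e_{J ∪ {1}}` to `e_J`, and `H e_J = 0` when `1 ∈ J`. The hypothesis on the characteristic
makes every `C(n, m)` with `n ≤ w_0 + ⋯ + w_d` invertible in `k`.

`∂H + H∂ = id` then reduces to the anticommutation of the square
`J ∪ {1} → J, J ∪ {1} ∖ {j} → J ∖ {j}` for `j ∈ J`. If some edge strictly between `1` and `j`
is missing, removing edge `1` does not change the interval of `j` and vice versa. Otherwise the
two edges lie in one interval, and the identity is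
`C(a+m+q, a+m) C(a+m, a) = C(m+q, m) C(a+m+q, a)`.
Since `H` raises the degree by one, a cycle `x` of degree `k` is the boundary of `H x`.
-/

open Finset

lemma cast_choose_ne_zero {R : Type*} [Ring R] [IsDomain R] {n k : ℕ}
    (hchar : ringChar R = 0 ∨ n < ringChar R) (hkn : k ≤ n) : (n.choose k : R) ≠ 0 := by
  rw [Ne, ringChar.spec]
  intro hdvd
  rcases hchar with h0 | hlt
  · rw [h0, zero_dvd_iff] at hdvd
    exact (Nat.choose_pos hkn).ne' hdvd
  · have hp : (ringChar R).Prime := (CharP.char_is_prime_or_zero R _).resolve_right (by omega)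
    have hfac : n.choose k ∣ n.factorial :=
      ⟨k.factorial * (n - k).factorial, by
        rw [← mul_assoc, Nat.choose_mul_factorial_mul_factorial hkn]⟩
    have hle := hp.dvd_factorial.1 (hdvd.trans hfac)
    omega

lemma choose_add_mul_choose (a m q : ℕ) :
    (a + m + q).choose (a + m) * (a + m).choose a = (m + q).choose m * (a + m + q).choose a := by
  rw [Nat.choose_mul (Nat.le_add_right a m), mul_comm]
  congr 2 <;> omega

lemma sum_Icc_consecutive (f : ℕ → ℕ) {a b c : ℕ} (hab : a ≤ b + 1) (hbc : b ≤ c) :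
    ∑ v ∈ Icc a b, f v + ∑ v ∈ Icc (b + 1) c, f v = ∑ v ∈ Icc a c, f v := by
  simp only [← Finset.Ico_add_one_right_eq_Icc]
  exact Finset.sum_Ico_consecutive f hab (by omega)

section Intervals

variable {I J : Finset ℕ} {d i j k v : ℕ}

lemma ivLeft_le (h : ∀ k ∈ Ioo v j, k ∈ J) : ivLeft J j ≤ v := Nat.sInf_le h

lemma mem_of_mem_Ioo_ivLeft (hk : k ∈ Ioo (ivLeft J j) j) : k ∈ J :=
  Nat.sInf_mem (s := {v | ∀ k ∈ Ioo v j, k ∈ J}) ⟨j, fun _ hk => by simp at hk⟩ k hk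

lemma le_ivLeft_of_notMem (hkj : k < j) (hkJ : k ∉ J) : k ≤ ivLeft J j := by
  by_contra! hlt
  exact hkJ (mem_of_mem_Ioo_ivLeft (mem_Ioo.2 ⟨hlt, hkj⟩))

lemma ivLeft_anti (hIJ : I ⊆ J) : ivLeft J j ≤ ivLeft I j :=
  ivLeft_le fun _ hk => hIJ (mem_of_mem_Ioo_ivLeft hk)

lemma ivLeft_one : ivLeft J 1 = 0 :=
  Nat.le_zero.1 (ivLeft_le fun k hk => by simp at hk; omega)

lemma le_ivRight (hvd : v ≤ d) (h : ∀ k ∈ Ioc j v, k ∈ J) : v ≤ ivRight d J j :=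
  le_csSup ⟨d, fun _ hv => hv.1⟩ ⟨hvd, h⟩

lemma ivRight_spec : ivRight d J j ≤ d ∧ ∀ k ∈ Ioc j (ivRight d J j), k ∈ J :=
  Nat.sSup_mem (s := {v | v ≤ d ∧ ∀ k ∈ Ioc j v, k ∈ J}) ⟨0, Nat.zero_le d, by simp⟩
    ⟨d, fun _ hv => hv.1⟩

lemma ivRight_le : ivRight d J j ≤ d := ivRight_spec.1

lemma mem_of_mem_Ioc_ivRight (hk : k ∈ Ioc j (ivRight d J j)) : k ∈ J := ivRight_spec.2 k hk

lemma ivRight_lt_of_notMem (hjk : j < k) (hkJ : k ∉ J) : ivRight d J j < k := by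
  by_contra! hle
  exact hkJ (mem_of_mem_Ioc_ivRight (mem_Ioc.2 ⟨hjk, hle⟩))

lemma ivRight_mono (hIJ : I ⊆ J) : ivRight d I j ≤ ivRight d J j :=
  le_ivRight ivRight_le fun _ hk => hIJ (mem_of_mem_Ioc_ivRight hk)

lemma ivRight_mono_right (hij : i ≤ j) : ivRight d J i ≤ ivRight d J j :=
  le_ivRight ivRight_le fun _ hk => mem_of_mem_Ioc_ivRight (Ioc_subset_Ioc_left hij hk)

lemma ivLeft_erase_of_le (hij : i ≤ j) : ivLeft (J.erase j) i = ivLeft J i := by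
  refine le_antisymm (ivLeft_le fun k hk => mem_erase.2 ⟨?_, mem_of_mem_Ioo_ivLeft hk⟩)
    (ivLeft_anti (erase_subset j J))
  simp only [mem_Ioo] at hk; omega

lemma ivRight_insert_of_le (hij : i ≤ j) : ivRight d (insert i J) j = ivRight d J j := by
  refine le_antisymm (le_ivRight ivRight_le fun k hk => ?_) (ivRight_mono (subset_insert i J))
  have hki : k ≠ i := by simp only [mem_Ioc] at hk; omega
  exact (mem_insert.1 (mem_of_mem_Ioc_ivRight hk)).resolve_left hki

lemma ivLeft_insert_of_notMem (hik : i < k) (hkj : k < j) (hkJ : k ∉ J) :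
    ivLeft (insert i J) j = ivLeft J j := by
  refine le_antisymm (ivLeft_anti (subset_insert i J)) (ivLeft_le fun m hm => ?_)
  have hk : k ≤ ivLeft (insert i J) j := le_ivLeft_of_notMem hkj (by simp [hkJ, hik.ne'])
  have hmi : m ≠ i := by simp only [mem_Ioo] at hm; omega
  exact (mem_insert.1 (mem_of_mem_Ioo_ivLeft hm)).resolve_left hmi

lemma ivRight_erase_of_notMem (hik : i < k) (hkj : k < j) (hkJ : k ∉ J) :
    ivRight d (J.erase j) i = ivRight d J i := by
  refine le_antisymm (ivRight_mono (erase_subset j J)) (le_ivRight ivRight_le fun m hm => ?_)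
  have hk : ivRight d J i < k := ivRight_lt_of_notMem hik hkJ
  have hmj : m ≠ j := by simp only [mem_Ioc] at hm; omega
  exact mem_erase.2 ⟨hmj, mem_of_mem_Ioc_ivRight hm⟩

end Intervals

noncomputable def intervalChoose (w : ℕ → ℕ) (d : ℕ) (J : Finset ℕ) (j : ℕ) : ℕ :=
  (wtTot w d J j).choose (wtL w J j)

section Square

variable {w : ℕ → ℕ} {J : Finset ℕ} {d i j k : ℕ}

lemma intervalChoose_insert_of_notMem (hik : i < k) (hkj : k < j) (hkJ : k ∉ J) :
    intervalChoose w d (insert i J) j = intervalChoose w d J j := by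
  rw [intervalChoose, wtTot, wtL, ivLeft_insert_of_notMem hik hkj hkJ,
    ivRight_insert_of_le (by omega), intervalChoose, wtTot, wtL]

lemma intervalChoose_erase_of_notMem (hik : i < k) (hkj : k < j) (hkJ : k ∉ J) :
    intervalChoose w d (J.erase j) i = intervalChoose w d J i := by
  rw [intervalChoose, wtTot, wtL, ivLeft_erase_of_le (by omega),
    ivRight_erase_of_notMem hik hkj hkJ, intervalChoose, wtTot, wtL]

-- With `a = w_0`, `m = w_1 + ⋯ + w_{j-1}` and `q = w_j + ⋯ + w_r`, where `r` is the right end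
-- of the interval of `j`, the four binomials are `C(a+m+q, a+m)`, `C(a+m, a)`, `C(m+q, m)` and
-- `C(a+m+q, a)`.
lemma intervalChoose_square_of_Ioo_subset (h1 : 1 ∉ J) (hj : j ∈ J) (h2j : 2 ≤ j) (hjd : j ≤ d)
    (hgap : ∀ k ∈ Ioo 1 j, k ∈ J) :
    intervalChoose w d (insert 1 J) j * intervalChoose w d (insert 1 (J.erase j)) 1 =
      intervalChoose w d J j * intervalChoose w d (insert 1 J) 1 := by
  set r := ivRight d J j
  have hjr : j ≤ r := le_ivRight hjd fun k hk => by simp at hk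
  have hL₁ : ivLeft (insert 1 J) j = 0 := Nat.le_zero.1 <| ivLeft_le fun k hk => by
    rcases eq_or_ne k 1 with rfl | hk1
    · exact mem_insert_self 1 J
    · exact mem_insert_of_mem (hgap k (by simp only [mem_Ioo] at hk ⊢; omega))
  have hL₂ : ivLeft J j = 1 := le_antisymm (ivLeft_le hgap) (le_ivLeft_of_notMem (by omega) h1)
  have hR₁ : ivRight d (insert 1 J) j = r := ivRight_insert_of_le (by omega)
  have hR₂ : ivRight d (insert 1 J) 1 = r := by
    refine le_antisymm (hR₁ ▸ ivRight_mono_right (by omega))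
      (le_ivRight ivRight_le fun k hk => mem_insert_of_mem ?_)
    rcases lt_trichotomy k j with hkj | rfl | hjk
    · exact hgap k (by simp only [mem_Ioc, mem_Ioo] at hk ⊢; omega)
    · exact hj
    · exact mem_of_mem_Ioc_ivRight (d := d) (j := j) (by simp only [mem_Ioc] at hk ⊢; omega)
  have hR₃ : ivRight d (insert 1 (J.erase j)) 1 = j - 1 := by
    refine le_antisymm (Nat.le_sub_one_of_lt (ivRight_lt_of_notMem (by omega) (by simp; omega)))
      (le_ivRight (by omega) fun k hk => mem_insert_of_mem (mem_erase.2 ⟨?_, hgap k ?_⟩)) <;>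
    simp only [mem_Ioc, mem_Ioo] at hk ⊢ <;> omega
  have hsum₁ := sum_Icc_consecutive w (a := 0) (b := 0) (c := j - 1) (by omega) (by omega)
  have hsum₂ := sum_Icc_consecutive w (a := 1) (b := j - 1) (c := r) (by omega) (by omega)
  have hsum₃ := sum_Icc_consecutive w (a := 0) (b := 0) (c := r) (by omega) (by omega)
  rw [Nat.sub_add_cancel (by omega : 1 ≤ j)] at hsum₂
  simp only [intervalChoose, wtTot, wtL, hL₁, hL₂, hR₁, hR₂, hR₃, ivLeft_one]
  rw [← hsum₃, ← hsum₂, ← hsum₁, ← add_assoc]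
  exact choose_add_mul_choose _ _ _

lemma intervalChoose_square (hJ : J ⊆ Icc 1 d) (h1 : 1 ∉ J) (hj : j ∈ J) :
    intervalChoose w d (insert 1 J) j * intervalChoose w d (insert 1 (J.erase j)) 1 =
      intervalChoose w d J j * intervalChoose w d (insert 1 J) 1 := by
  have hjd := mem_Icc.1 (hJ hj)
  have h2j : 2 ≤ j := by rcases eq_or_ne j 1 with rfl | h <;> [exact absurd hj h1; omega]
  by_cases hgap : ∀ k ∈ Ioo 1 j, k ∈ J
  · exact intervalChoose_square_of_Ioo_subset h1 hj h2j hjd.2 hgap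
  · obtain ⟨k, hk, hkJ⟩ := not_forall₂.1 hgap
    have hk' := mem_Ioo.1 hk
    rw [← erase_insert_of_ne (by omega : 1 ≠ j),
      intervalChoose_erase_of_notMem hk'.1 hk'.2 (by simp [hkJ]; omega),
      intervalChoose_insert_of_notMem hk'.1 hk'.2 hkJ]

end Square

lemma sgn_one (J : Finset ℕ) : sgn J 1 = 0 := by simp [sgn]

lemma sgn_insert_of_notMem {J : Finset ℕ} {i j : ℕ} (hi : 1 ≤ i) (hij : i < j) (hiJ : i ∉ J) :
    sgn (insert i J) j + 1 = sgn J j := by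
  have hmem : i ∈ (Ico 1 j).filter (· ∉ J) := by simp [hiJ, hi, hij]
  rw [sgn, sgn, ← card_erase_add_one hmem]
  congr 2
  ext k
  simp only [mem_filter, mem_erase, mem_Ico, mem_insert, not_or]
  tauto

lemma wtTot_le_sum_range (w : ℕ → ℕ) (d : ℕ) (J : Finset ℕ) (j : ℕ) :
    wtTot w d J j ≤ ∑ i ∈ range (d + 1), w i := by
  refine sum_le_sum_of_subset fun v hv => ?_
  have hr := ivRight_le (d := d) (J := J) (j := j)
  simp only [mem_Icc, mem_range] at hv ⊢
  omega

lemma wtL_one_le_wtTot (w : ℕ → ℕ) (d : ℕ) (J : Finset ℕ) : wtL w J 1 ≤ wtTot w d J 1 := by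
  rw [wtL, wtTot, ivLeft_one]
  exact sum_le_sum_of_subset (Icc_subset_Icc_right (Nat.zero_le _))

noncomputable def bndCoeff (K : Type*) [CommRing K] (w : ℕ → ℕ) (d : ℕ) (J : Finset ℕ) (j : ℕ) :
    K :=
  (-1) ^ sgn J j * intervalChoose w d J j

section Coefficients

variable {K : Type*} [CommRing K] {w : ℕ → ℕ} {d j : ℕ} {J : Finset ℕ}

lemma bndCoeff_one_ne_zero [IsDomain K]
    (hchar : ringChar K = 0 ∨ ∑ i ∈ range (d + 1), w i < ringChar K) (J : Finset ℕ) :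
    bndCoeff K w d J 1 ≠ 0 := by
  rw [bndCoeff, sgn_one, pow_zero, one_mul]
  exact cast_choose_ne_zero (hchar.imp_right (wtTot_le_sum_range w d J 1).trans_lt)
    (wtL_one_le_wtTot w d J)

lemma bndCoeff_square (hJ : J ⊆ Icc 1 d) (h1 : 1 ∉ J) (hj : j ∈ J) :
    bndCoeff K w d (insert 1 J) j * bndCoeff K w d (insert 1 (J.erase j)) 1 =
      -(bndCoeff K w d J j * bndCoeff K w d (insert 1 J) 1) := by
  have h2j : 1 < j := lt_of_le_of_ne (mem_Icc.1 (hJ hj)).1 (ne_of_mem_of_not_mem hj h1).symm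
  have hsq := congrArg (Nat.cast (R := K)) (intervalChoose_square (w := w) hJ h1 hj)
  push_cast at hsq
  simp only [bndCoeff, sgn_one, ← sgn_insert_of_notMem le_rfl h2j h1, pow_succ, pow_zero]
  linear_combination (-1 : K) ^ sgn (insert 1 J) j * hsq

end Coefficients

abbrev EdgeSubset (d : ℕ) := {J : Finset ℕ // J ⊆ Icc 1 d}

section Homotopy

variable {K : Type*} [Field K] {w : ℕ → ℕ} {d : ℕ} (hd : 1 ≤ d)

def eraseEdge (J : EdgeSubset d) (j : ℕ) : EdgeSubset d :=
  ⟨J.1.erase j, fun _ hx => J.2 (mem_of_mem_erase hx)⟩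

def insertOne (J : EdgeSubset d) : EdgeSubset d :=
  ⟨insert 1 J.1, insert_subset (mem_Icc.2 ⟨le_rfl, hd⟩) J.2⟩

lemma val_eraseEdge (J : EdgeSubset d) (j : ℕ) : (eraseEdge J j).1 = J.1.erase j := rfl

lemma val_insertOne (J : EdgeSubset d) : (insertOne hd J).1 = insert 1 J.1 := rfl

lemma eraseEdge_insertOne (J : EdgeSubset d) {j : ℕ} (hj : j ≠ 1) :
    eraseEdge (insertOne hd J) j = insertOne hd (eraseEdge J j) :=
  Subtype.ext (erase_insert_of_ne hj.symm)

lemma eraseEdge_insertOne_one {J : EdgeSubset d} (h1 : 1 ∉ J.1) :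
    eraseEdge (insertOne hd J) 1 = J :=
  Subtype.ext (erase_insert h1)

lemma insertOne_eraseEdge_one {J : EdgeSubset d} (h1 : 1 ∈ J.1) :
    insertOne hd (eraseEdge J 1) = J :=
  Subtype.ext (insert_erase h1)

lemma bnd_single (J : EdgeSubset d) :
    bnd K w d (Finsupp.single J 1) =
      ∑ j ∈ J.1, bndCoeff K w d J.1 j • Finsupp.single (eraseEdge J j) 1 := by
  rw [bnd, Finsupp.lsum_single, LinearMap.toSpanSingleton_apply, one_smul]
  rfl

lemma bnd_single_insertOne {J : EdgeSubset d} (h1 : 1 ∉ J.1) :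
    bnd K w d (Finsupp.single (insertOne hd J) 1) =
      bndCoeff K w d (insert 1 J.1) 1 • Finsupp.single J 1 +
        ∑ j ∈ J.1, bndCoeff K w d (insert 1 J.1) j •
          Finsupp.single (insertOne hd (eraseEdge J j)) 1 := by
  rw [bnd_single, val_insertOne, sum_insert h1, eraseEdge_insertOne_one hd h1]
  refine congrArg _ (sum_congr rfl fun j hj => ?_)
  rw [eraseEdge_insertOne hd J (ne_of_mem_of_not_mem hj h1)]

variable (K w) in
noncomputable def contractingHomotopy :
    (EdgeSubset d →₀ K) →ₗ[K] (EdgeSubset d →₀ K) :=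
  Finsupp.linearCombination K fun J =>
    if 1 ∈ J.1 then 0
    else (bndCoeff K w d (insert 1 J.1) 1)⁻¹ • Finsupp.single (insertOne hd J) 1

lemma contractingHomotopy_single_of_mem {J : EdgeSubset d} (h1 : 1 ∈ J.1) :
    contractingHomotopy K w hd (Finsupp.single J 1) = 0 := by
  rw [contractingHomotopy, Finsupp.linearCombination_single, one_smul, if_pos h1]

lemma contractingHomotopy_single_of_notMem {J : EdgeSubset d} (h1 : 1 ∉ J.1) :
    contractingHomotopy K w hd (Finsupp.single J 1) =
      (bndCoeff K w d (insert 1 J.1) 1)⁻¹ • Finsupp.single (insertOne hd J) 1 := by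
  rw [contractingHomotopy, Finsupp.linearCombination_single, one_smul, if_neg h1]

lemma contractingHomotopy_bnd_single_of_mem
    (hchar : ringChar K = 0 ∨ ∑ i ∈ range (d + 1), w i < ringChar K) {J : EdgeSubset d}
    (h1 : 1 ∈ J.1) :
    contractingHomotopy K w hd (bnd K w d (Finsupp.single J 1)) = Finsupp.single J 1 := by
  rw [bnd_single, map_sum, sum_eq_single_of_mem 1 h1]
  · rw [map_smul, contractingHomotopy_single_of_notMem hd (notMem_erase 1 J.1),
      insertOne_eraseEdge_one hd h1, smul_smul]
    rw [val_eraseEdge, insert_erase h1, mul_inv_cancel₀ (bndCoeff_one_ne_zero hchar _), one_smul]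
  · intro j _ hj1
    rw [map_smul, contractingHomotopy_single_of_mem hd (mem_erase.2 ⟨Ne.symm hj1, h1⟩),
      smul_zero]

lemma bnd_contractingHomotopy_add_single_of_notMem
    (hchar : ringChar K = 0 ∨ ∑ i ∈ range (d + 1), w i < ringChar K) {J : EdgeSubset d}
    (h1 : 1 ∉ J.1) :
    bnd K w d (contractingHomotopy K w hd (Finsupp.single J 1)) +
      contractingHomotopy K w hd (bnd K w d (Finsupp.single J 1)) = Finsupp.single J 1 := by
  rw [contractingHomotopy_single_of_notMem hd h1, map_smul, bnd_single_insertOne hd h1, smul_add,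
    smul_smul, inv_mul_cancel₀ (bndCoeff_one_ne_zero hchar _), one_smul, add_assoc, add_eq_left,
    bnd_single, map_sum, smul_sum, ← sum_add_distrib]
  refine sum_eq_zero fun j hj => ?_
  have h1' : 1 ∉ (eraseEdge J j).1 := fun h => h1 (mem_of_mem_erase h)
  rw [map_smul, contractingHomotopy_single_of_notMem hd h1', smul_smul, smul_smul, ← add_smul]
  refine smul_eq_zero_of_left ?_ _
  rw [val_eraseEdge]
  have hsq := bndCoeff_square (K := K) (w := w) J.2 h1 hj
  have hc := bndCoeff_one_ne_zero hchar (insert 1 J.1)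
  have hc' := bndCoeff_one_ne_zero hchar (insert 1 (J.1.erase j))
  field_simp
  linear_combination hsq

lemma bnd_comp_contractingHomotopy_add
    (hchar : ringChar K = 0 ∨ ∑ i ∈ range (d + 1), w i < ringChar K) :
    bnd K w d ∘ₗ contractingHomotopy K w hd + contractingHomotopy K w hd ∘ₗ bnd K w d =
      LinearMap.id := by
  refine Finsupp.lhom_ext' fun J => LinearMap.ext_ring ?_
  simp only [LinearMap.comp_apply, LinearMap.add_apply, Finsupp.lsingle_apply, LinearMap.id_apply]
  by_cases h1 : 1 ∈ J.1
  · rw [contractingHomotopy_single_of_mem hd h1, map_zero, zero_add,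
      contractingHomotopy_bnd_single_of_mem hd hchar h1]
  · exact bnd_contractingHomotopy_add_single_of_notMem hd hchar h1

lemma contractingHomotopy_mem_supported {k : ℕ} {x : EdgeSubset d →₀ K}
    (hx : x ∈ Finsupp.supported K K {J : EdgeSubset d | J.1.card = k}) :
    contractingHomotopy K w hd x ∈ Finsupp.supported K K {J : EdgeSubset d | J.1.card = k + 1} := by
  suffices Finsupp.supported K K {J : EdgeSubset d | J.1.card = k} ≤
      (Finsupp.supported K K {J : EdgeSubset d | J.1.card = k + 1}).comap
        (contractingHomotopy K w hd) from this hx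
  rw [Finsupp.supported_eq_span_single, Submodule.span_le]
  rintro _ ⟨J, hJ, rfl⟩
  by_cases h1 : 1 ∈ J.1
  · simp [contractingHomotopy_single_of_mem hd h1]
  · rw [SetLike.mem_coe, Submodule.mem_comap, contractingHomotopy_single_of_notMem hd h1]
    refine Submodule.smul_mem _ _ (Finsupp.single_mem_supported K 1 ?_)
    simpa [insertOne, card_insert_of_notMem h1] using hJ

end Homotopy

/-- if `char K = 0` or `char K > w_0 + ⋯ + w_d`, then the complex
`C_•(w_0,…,w_d)` is exact: every cycle supported in homological degree `k`
(i.e. on subsets of cardinality `k`) is the boundary of a chain supported in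
degree `k+1`. -/
theorem arithmeticComplex_exact (K : Type*) [Field K] (w : ℕ → ℕ) (d : ℕ) (hd : 1 ≤ d)
    (hchar : ringChar K = 0 ∨ ∑ i ∈ Finset.range (d + 1), w i < ringChar K) :
    ∀ (k : ℕ) (x : {J : Finset ℕ // J ⊆ Finset.Icc 1 d} →₀ K),
      (∀ J ∈ x.support, J.1.card = k) →
      bnd K w d x = 0 →
      ∃ y : {J : Finset ℕ // J ⊆ Finset.Icc 1 d} →₀ K,
        (∀ J ∈ y.support, J.1.card = k + 1) ∧ bnd K w d y = x := by
  intro k x hx hcyc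
  have hy := contractingHomotopy_mem_supported hd (w := w) ((Finsupp.mem_supported K x).2 hx)
  refine ⟨contractingHomotopy K w hd x, (Finsupp.mem_supported K _).1 hy, ?_⟩
  simpa [hcyc] using LinearMap.congr_fun (bnd_comp_contractingHomotopy_add hd hchar) x
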